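/- For n ≥ 3, the outer mutual-visibility number of L(K_n) equals ex(n; K_4^-), the maximum number of edges of an n-vertex graph with no subgraph isomorphic to K_4 minus an edge. -/

import Mathlib

/-!
In `L(K_n)` two distinct edges of `K_n` are adjacent iff they meet, and two disjoint edges `ab`,
`cd` are at distance 2, their common neighbours being exactly `ac, ad, bc, bd`. So `ab` and `cd` are
`X`-visible iff one of these four edges is missing from `X`. Reading a set `X` of edges of `K_n` as
a graph `H` on the vertices of `K_n`, `X` fails to be outer mutual-visibility iff some edge `ab` of
`H` and some pair `c ≠ d` have `ac, ad, bc, bd` in `H`, i.e. iff `H` contains `K_4^-`. This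
correspondence preserves the number of edges, so both maxima are taken over the same numbers.
-/

namespace MutualVisibility

open SimpleGraph

variable {V W : Type*}

/-- `x` and `y` are `X`-visible in `G`: there is a shortest `x,y`-path all of whose
internal vertices avoid `X`. -/
def Visible (G : SimpleGraph V) (X : Set V) (x y : V) : Prop :=
  ∃ p : G.Walk x y, p.length = G.dist x y ∧ ∀ v ∈ p.support, v ≠ x → v ≠ y → v ∉ X

/-- `X` is a mutual-visibility set: any two vertices of `X` are `X`-visible. -/
def IsMutualVisSet (G : SimpleGraph V) (X : Set V) : Prop :=
  ∀ x ∈ X, ∀ y ∈ X, Visible G X x y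

/-- outer mutual-visibility set -/
def IsOuterMutualVisSet (G : SimpleGraph V) (X : Set V) : Prop :=
  IsMutualVisSet G X ∧ ∀ x ∈ X, ∀ y ∉ X, Visible G X x y

/-- dual mutual-visibility set -/
def IsDualMutualVisSet (G : SimpleGraph V) (X : Set V) : Prop :=
  IsMutualVisSet G X ∧ ∀ x ∉ X, ∀ y ∉ X, Visible G X x y

/-- total mutual-visibility set -/
def IsTotalMutualVisSet (G : SimpleGraph V) (X : Set V) : Prop :=
  ∀ x y : V, Visible G X x y

/-- mutual-visibility number μ(G) -/
noncomputable def mu (G : SimpleGraph V) : ℕ :=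
  sSup {k | ∃ X : Set V, IsMutualVisSet G X ∧ X.ncard = k}

/-- outer mutual-visibility number μ_o(G) -/
noncomputable def muOuter (G : SimpleGraph V) : ℕ :=
  sSup {k | ∃ X : Set V, IsOuterMutualVisSet G X ∧ X.ncard = k}

/-- dual mutual-visibility number μ_d(G) -/
noncomputable def muDual (G : SimpleGraph V) : ℕ :=
  sSup {k | ∃ X : Set V, IsDualMutualVisSet G X ∧ X.ncard = k}

/-- total mutual-visibility number μ_t(G) -/
noncomputable def muTotal (G : SimpleGraph V) : ℕ :=
  sSup {k | ∃ X : Set V, IsTotalMutualVisSet G X ∧ X.ncard = k}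

/-- `H` contains a subgraph copy of `F`. -/
def ContainsCopy (F : SimpleGraph W) (H : SimpleGraph V) : Prop :=
  ∃ f : W → V, Function.Injective f ∧ ∀ a b, F.Adj a b → H.Adj (f a) (f b)

/-- The Turán number ex(n; F): max number of edges of an `n`-vertex graph with no copy of `F`. -/
noncomputable def exNum (n : ℕ) (F : SimpleGraph W) : ℕ :=
  sSup {k | ∃ H : SimpleGraph (Fin n), ¬ ContainsCopy F H ∧ H.edgeSet.ncard = k}

/-- The direct (tensor/categorical) product of graphs. -/
def directProd (G : SimpleGraph V) (H : SimpleGraph W) : SimpleGraph (V × W) where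
  Adj x y := G.Adj x.1 y.1 ∧ H.Adj x.2 y.2
  symm := ⟨fun _ _ h => ⟨h.1.symm, h.2.symm⟩⟩
  loopless := ⟨fun x h => G.loopless.irrefl x.1 h.1⟩

/-- The join `G + H` of two graphs. -/
def graphJoin (G : SimpleGraph V) (H : SimpleGraph W) : SimpleGraph (V ⊕ W) where
  Adj u v := match u, v with
    | Sum.inl a, Sum.inl b => G.Adj a b
    | Sum.inr a, Sum.inr b => H.Adj a b
    | _, _ => True
  symm := ⟨fun u v => match u, v with
    | Sum.inl _, Sum.inl _ => fun h => G.symm.symm _ _ h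
    | Sum.inr _, Sum.inr _ => fun h => H.symm.symm _ _ h
    | Sum.inl _, Sum.inr _ => fun _ => trivial
    | Sum.inr _, Sum.inl _ => fun _ => trivial⟩
  loopless := ⟨fun u => match u with
    | Sum.inl a => G.loopless.irrefl a
    | Sum.inr a => H.loopless.irrefl a⟩

/-- A big-μ graph: `G = (K_1 ∪ K_t) + H` for some `t ≥ 0` and some graph `H`. -/
def IsBigMu {V : Type} (G : SimpleGraph V) : Prop :=
  ∃ (t : ℕ) (W : Type) (H : SimpleGraph W),
    Nonempty (G ≃g graphJoin ((⊤ : SimpleGraph (Fin 1)) ⊕g (⊤ : SimpleGraph (Fin t))) H)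

/-- A cograph: a graph with no induced path on four vertices. -/
def IsCograph (G : SimpleGraph V) : Prop :=
  ¬ ∃ f : Fin 4 → V, Function.Injective f ∧
      ∀ a b, (pathGraph 4).Adj a b ↔ G.Adj (f a) (f b)

/-- The Petersen graph, realized as the Kneser graph K(5,2). -/
def petersen : SimpleGraph {s : Finset (Fin 5) // s.card = 2} where
  Adj a b := Disjoint a.1 b.1
  symm := ⟨fun _ _ h => h.symm⟩
  loopless := ⟨by
    rintro ⟨s, hs⟩ h
    rw [disjoint_self, Finset.bot_eq_empty] at h
    subst h
    simp at hs⟩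

section Visibility

variable {G : SimpleGraph V} {X : Set V} {x y : V}

lemma visible_refl (X : Set V) (x : V) : Visible G X x x :=
  ⟨.nil, by simp, by simp⟩

lemma visible_of_adj (X : Set V) (h : G.Adj x y) : Visible G X x y :=
  ⟨h.toWalk, by simp [dist_eq_one_iff_adj.2 h], by simp +contextual⟩

lemma dist_eq_two_of_adj_of_adj {z : V} (hne : x ≠ y) (hnadj : ¬ G.Adj x y)
    (hxz : G.Adj x z) (hzy : G.Adj z y) : G.dist x y = 2 := by
  have : G.edist x y = 2 := edist_eq_two_iff.2 ⟨hne, hnadj, z, hxz, hzy.symm⟩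
  simp [SimpleGraph.dist, this]

lemma visible_iff_of_dist_eq_two (hd : G.dist x y = 2) :
    Visible G X x y ↔ ∃ z, G.Adj x z ∧ G.Adj z y ∧ z ∉ X := by
  constructor
  · rintro ⟨p, hlen, havoid⟩
    rw [hd] at hlen
    rcases p with _ | @⟨_, z, _, hxz, _ | @⟨_, _, _, hzy, _ | _⟩⟩ <;> simp at hlen
    have hzy' : z ≠ y := by
      rintro rfl
      simp [dist_eq_one_iff_adj.2 hxz] at hd
    exact ⟨z, hxz, hzy, havoid z (by simp) hxz.ne' hzy'⟩
  · rintro ⟨z, hxz, hzy, hz⟩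
    refine ⟨.cons hxz (.cons hzy .nil), by simp [hd], ?_⟩
    simp only [Walk.support_cons, Walk.support_nil, List.mem_cons, List.not_mem_nil]
    rintro v (rfl | rfl | rfl | h) <;> simp_all

lemma isOuterMutualVisSet_iff :
    IsOuterMutualVisSet G X ↔ ∀ x ∈ X, ∀ y, Visible G X x y := by
  refine ⟨fun ⟨hin, hout⟩ x hx y => ?_,
    fun h => ⟨fun x hx y _ => h x hx y, fun x hx y _ => h x hx y⟩⟩
  by_cases hy : y ∈ X
  exacts [hin x hx y hy, hout x hx y hy]

end Visibility

lemma lineGraph_adj_adj_iff {G : SimpleGraph V} {e f g : G.edgeSet}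
    (hdisj : ∀ v ∈ (e : Sym2 V), v ∉ (f : Sym2 V)) :
    G.lineGraph.Adj e g ∧ G.lineGraph.Adj g f ↔
      ∃ u ∈ (e : Sym2 V), ∃ v ∈ (f : Sym2 V), (g : Sym2 V) = s(u, v) := by
  simp only [lineGraph_adj_iff_exists]
  constructor
  · rintro ⟨⟨-, u, hue, hug⟩, -, v, hvg, hvf⟩
    have huv : u ≠ v := by rintro rfl; exact hdisj u hue hvf
    exact ⟨u, hue, v, hvf, (Sym2.mem_and_mem_iff huv).1 ⟨hug, hvg⟩⟩
  · rintro ⟨u, hue, v, hvf, hg⟩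
    refine ⟨⟨?_, u, hue, by simp [hg]⟩, ?_, v, by simp [hg], hvf⟩
    · rintro rfl; exact hdisj v (by simp [hg]) hvf
    · rintro rfl; exact hdisj u hue (by simp [hg])

lemma visible_lineGraph_top_iff {H : SimpleGraph V} {e f : (⊤ : SimpleGraph V).edgeSet}
    (hdisj : ∀ v ∈ (e : Sym2 V), v ∉ (f : Sym2 V)) :
    Visible (⊤ : SimpleGraph V).lineGraph (Subtype.val ⁻¹' H.edgeSet) e f ↔
      ∃ u ∈ (e : Sym2 V), ∃ v ∈ (f : Sym2 V), ¬ H.Adj u v := by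
  have he := Sym2.out_fst_mem (e : Sym2 V)
  have hf := Sym2.out_fst_mem (f : Sym2 V)
  have hef : (e : Sym2 V).out.1 ≠ (f : Sym2 V).out.1 := fun h => hdisj _ he (h ▸ hf)
  have hmid := (lineGraph_adj_adj_iff (g := ⟨_, (top_adj _ _).2 hef⟩) hdisj).2 ⟨_, he, _, hf, rfl⟩
  have hne : e ≠ f := by rintro rfl; exact hdisj _ he he
  have hnadj : ¬ (⊤ : SimpleGraph V).lineGraph.Adj e f := by
    rw [lineGraph_adj_iff_exists]
    rintro ⟨-, w, hwe, hwf⟩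
    exact hdisj w hwe hwf
  rw [visible_iff_of_dist_eq_two (dist_eq_two_of_adj_of_adj hne hnadj hmid.1 hmid.2)]
  constructor
  · rintro ⟨g, hge, hgf, hgH⟩
    obtain ⟨u, hue, v, hvf, hguv⟩ := (lineGraph_adj_adj_iff hdisj).1 ⟨hge, hgf⟩
    exact ⟨u, hue, v, hvf, fun h => hgH (by rw [Set.mem_preimage, hguv]; exact h)⟩
  · rintro ⟨u, hue, v, hvf, huv⟩
    have hne : u ≠ v := by rintro rfl; exact hdisj u hue hvf
    have hg := (lineGraph_adj_adj_iff (G := ⊤) (g := ⟨s(u, v), (top_adj u v).2 hne⟩) hdisj).2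
      ⟨u, hue, v, hvf, rfl⟩
    exact ⟨_, hg.1, hg.2, huv⟩

lemma containsCopy_K4_minus_iff {H : SimpleGraph V} :
    ContainsCopy ((⊤ : SimpleGraph (Fin 4)).deleteEdges {s(0, 1)}) H ↔
      ∃ a b c d, c ≠ d ∧ H.Adj a b ∧ H.Adj a c ∧ H.Adj a d ∧ H.Adj b c ∧ H.Adj b d := by
  constructor
  · rintro ⟨φ, hφ, hadj⟩
    have h : ∀ i j : Fin 4, i ≠ j → s(i, j) ≠ s(0, 1) → H.Adj (φ i) (φ j) := fun i j hij h01 =>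
      hadj i j (by simp [deleteEdges_adj, hij, h01])
    exact ⟨φ 2, φ 3, φ 0, φ 1, hφ.ne (by decide), h 2 3 (by decide) (by decide),
      h 2 0 (by decide) (by decide), h 2 1 (by decide) (by decide),
      h 3 0 (by decide) (by decide), h 3 1 (by decide) (by decide)⟩
  · rintro ⟨a, b, c, d, hcd, hab, hac, had, hbc, hbd⟩
    refine ⟨![c, d, a, b], ?_, ?_⟩
    · have := hab.ne; have := hac.ne; have := had.ne; have := hbc.ne; have := hbd.ne
      intro i j hij
      fin_cases i <;> fin_cases j <;> simp_all [eq_comm]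
    · intro i j hij
      fin_cases i <;> fin_cases j <;> simp_all [deleteEdges_adj, adj_comm]

theorem isOuterMutualVisSet_lineGraph_top_iff (H : SimpleGraph V) :
    IsOuterMutualVisSet (⊤ : SimpleGraph V).lineGraph (Subtype.val ⁻¹' H.edgeSet) ↔
      ¬ ContainsCopy ((⊤ : SimpleGraph (Fin 4)).deleteEdges {s(0, 1)}) H := by
  rw [isOuterMutualVisSet_iff, containsCopy_K4_minus_iff]
  constructor
  · rintro hvis ⟨a, b, c, d, hcd, hab, hac, had, hbc, hbd⟩
    have hdisj : ∀ v ∈ s(a, b), v ∉ s(c, d) := by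
      simp only [Sym2.mem_iff]
      rintro v (rfl | rfl) (rfl | rfl) <;> simp_all
    obtain ⟨u, hu, v, hv, huv⟩ := (visible_lineGraph_top_iff (e := ⟨_, hab.ne⟩) (f := ⟨_, hcd⟩)
      hdisj).1 (hvis _ hab _)
    simp only [Sym2.mem_iff] at hu hv
    rcases hu with rfl | rfl <;> rcases hv with rfl | rfl <;> contradiction
  · rintro hfree ⟨e, he⟩ heH ⟨f, hf⟩
    by_cases hdisj : ∀ v ∈ e, v ∉ f
    · induction e using Sym2.ind with | _ a b => ?_
      induction f using Sym2.ind with | _ c d => ?_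
      rw [visible_lineGraph_top_iff hdisj]
      by_contra! hall
      simp only [Sym2.mem_iff, forall_eq_or_imp, forall_eq] at hall
      exact hfree ⟨a, b, c, d, hf, heH, hall.1.1, hall.1.2, hall.2.1, hall.2.2⟩
    · push Not at hdisj
      obtain ⟨v, hve, hvf⟩ := hdisj
      by_cases hef : (⟨e, he⟩ : (⊤ : SimpleGraph V).edgeSet) = ⟨f, hf⟩
      · rw [hef]; exact visible_refl _ _
      · exact visible_of_adj _ (lineGraph_adj_iff_exists.2 ⟨hef, v, hve, hvf⟩)

@[simps apply]
def equivSetEdgeSetTop : SimpleGraph V ≃ Set (⊤ : SimpleGraph V).edgeSet where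
  toFun H := Subtype.val ⁻¹' H.edgeSet
  invFun X := fromEdgeSet (Subtype.val '' X)
  left_inv H := by
    ext a b
    simpa [Set.image_preimage_eq_inter_range] using H.ne_of_adj
  right_inv X := by
    ext ⟨e, he⟩
    simpa using fun _ => not_isDiag_of_mem_edgeSet _ he

lemma ncard_preimage_val_edgeSet (H : SimpleGraph V) :
    (Subtype.val ⁻¹' H.edgeSet : Set (⊤ : SimpleGraph V).edgeSet).ncard = H.edgeSet.ncard :=
  Set.ncard_preimage_of_injective_subset_range Subtype.val_injective
    (by rw [Subtype.range_coe]; exact edgeSet_mono le_top)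

theorem muOuter_lineGraph_complete_eq_ex_K4_minus_general (n : ℕ) :
    muOuter (⊤ : SimpleGraph (Fin n)).lineGraph
      = exNum n ((⊤ : SimpleGraph (Fin 4)).deleteEdges {s(0, 1)}) := by
  unfold muOuter exNum
  congr 1
  ext k
  rw [Set.mem_ofPred_eq, Set.mem_ofPred_eq, equivSetEdgeSetTop.symm.exists_congr_left]
  simp only [Equiv.symm_symm, equivSetEdgeSetTop_apply, isOuterMutualVisSet_lineGraph_top_iff,
    ncard_preimage_val_edgeSet]

theorem muOuter_lineGraph_complete_eq_ex_K4_minus (n : ℕ) (hn : 3 ≤ n) :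
    muOuter (⊤ : SimpleGraph (Fin n)).lineGraph
      = exNum n ((⊤ : SimpleGraph (Fin 4)).deleteEdges {s(0, 1)}) :=
  muOuter_lineGraph_complete_eq_ex_K4_minus_general n

end MutualVisibility
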